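/- arXiv:2308.01877 — 4 statements merged into one kernel-verified Lean document; each statement's English description precedes it below -/
import Mathlib

section
/- Let X be a proper geodesic metric space and γ a D-contracting geodesic in X (meaning: for every geodesic κ with d(γ, κ) > D, the diameter of the nearest-point projection of κ onto γ is less than D). Then for any points x, y in X, the diameter of the union of the projections of x and y onto γ is at most d(x, y) + 4D. -/
open Metric Set

variable {X : Type*} [MetricSpace X]

/-- Nearest-point projection of the point `x` to the set `A`. -/
noncomputable def proj (A : Set X) (x : X) : Set X :=
  {a | a ∈ A ∧ dist x a = infDist x A}

/-- Nearest-point projection of the set `B` to the set `A`. -/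
noncomputable def projSet (A B : Set X) : Set X := ⋃ x ∈ B, proj A x

/-- Distance between two subsets of a metric space. -/
noncomputable def setDist (A B : Set X) : ℝ := sInf (Set.image2 dist A B)

/-- `γ` is a geodesic segment from `x` to `y` (image of a unit-speed parameterization). -/
def IsGeodesicSeg (γ : Set X) (x y : X) : Prop :=
  ∃ (f : ℝ → X) (L : ℝ), 0 ≤ L ∧
    (∀ s ∈ Icc 0 L, ∀ t ∈ Icc 0 L, dist (f s) (f t) = |s - t|) ∧
    f 0 = x ∧ f L = y ∧ γ = f '' Icc 0 L

/-- `γ` is a geodesic segment. -/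
def IsGeodesic (γ : Set X) : Prop := ∃ x y, IsGeodesicSeg γ x y

/-- `γ` is `D`-contracting: any geodesic at distance `> D` from `γ`
projects onto `γ` with diameter `< D`. -/
def IsContractingSet (D : ℝ) (γ : Set X) : Prop :=
  ∀ κ : Set X, IsGeodesic κ → D < setDist γ κ → diam (projSet γ κ) < D

/-- `X` is a geodesic metric space. -/
def GeodesicSpace (X : Type*) [MetricSpace X] : Prop :=
  ∀ x y : X, ∃ γ : Set X, IsGeodesicSeg γ x y

/-! ### Auxiliary lemmas -/

lemma aux_continuousOn {f : ℝ → X} {L : ℝ}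
    (hf : ∀ s ∈ Icc 0 L, ∀ t ∈ Icc 0 L, dist (f s) (f t) = |s - t|) :
    ContinuousOn f (Icc 0 L) := by
  refine (LipschitzOnWith.of_dist_le_mul (K := 1) ?_).continuousOn
  intro s hs t ht
  rw [hf s hs t ht, Real.dist_eq, NNReal.coe_one, one_mul]

lemma aux_proj_nonempty {γ : Set X} (hγc : IsCompact γ) (hγne : γ.Nonempty) (z : X) :
    (proj γ z).Nonempty := by
  obtain ⟨p, hp, hd⟩ := hγc.exists_infDist_eq_dist hγne z
  exact ⟨p, hp, hd.symm⟩

/-- If a geodesic segment stays strictly farther than `D` from `γ`, then projections of its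
endpoints are at distance at most `D`. -/
lemma aux_far (D : ℝ) {γ : Set X} (hγc : IsCompact γ) (hγne : γ.Nonempty)
    (hcon : IsContractingSet D γ) (f : ℝ → X) (L : ℝ) (hL : 0 ≤ L)
    (hf : ∀ s ∈ Icc 0 L, ∀ t ∈ Icc 0 L, dist (f s) (f t) = |s - t|)
    (hfar : ∀ t ∈ Icc 0 L, D < infDist (f t) γ)
    {p q : X} (hp : p ∈ proj γ (f 0)) (hq : q ∈ proj γ (f L)) : dist p q ≤ D := by
  set κ := f '' Icc 0 L with hκ
  have hgeo : IsGeodesic κ := ⟨f 0, f L, f, L, hL, hf, rfl, rfl, rfl⟩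
  have hκc : IsCompact κ := isCompact_Icc.image_of_continuousOn (aux_continuousOn hf)
  have h0κ : f 0 ∈ κ := mem_image_of_mem f ⟨le_refl 0, hL⟩
  have hLκ : f L ∈ κ := mem_image_of_mem f ⟨hL, le_refl L⟩
  have hκne : κ.Nonempty := ⟨f 0, h0κ⟩
  have hfar2 : ∀ z ∈ κ, D < infDist z γ := by
    rintro z ⟨t, ht, rfl⟩; exact hfar t ht
  obtain ⟨z₀, hz₀κ, hz₀min⟩ := hκc.exists_isMinOn hκne (continuous_infDist_pt γ).continuousOn
  have hsd : D < setDist γ κ := by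
    refine lt_of_lt_of_le (hfar2 z₀ hz₀κ) (le_csInf (hγne.image2 hκne) ?_)
    rintro r ⟨a, ha, z, hz, rfl⟩
    calc infDist z₀ γ ≤ infDist z γ := hz₀min hz
      _ ≤ dist z a := infDist_le_dist_of_mem ha
      _ = dist a z := dist_comm z a
  have hdiam := hcon κ hgeo hsd
  have hsub : projSet γ κ ⊆ γ := by
    intro w hw
    simp only [projSet, mem_iUnion] at hw
    obtain ⟨z, _, hwz⟩ := hw
    exact hwz.1
  have hb : Bornology.IsBounded (projSet γ κ) := hγc.isBounded.subset hsub
  have hpm : p ∈ projSet γ κ := mem_iUnion₂.mpr ⟨f 0, h0κ, hp⟩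
  have hqm : q ∈ projSet γ κ := mem_iUnion₂.mpr ⟨f L, hLκ, hq⟩
  exact (dist_le_diam_of_mem hb hpm hqm).trans hdiam.le

lemma aux_closed (D : ℝ) (γ : Set X) {f : ℝ → X} {L : ℝ} (hL : 0 ≤ L)
    (hf : ∀ s ∈ Icc 0 L, ∀ t ∈ Icc 0 L, dist (f s) (f t) = |s - t|) :
    IsClosed {t | t ∈ Icc 0 L ∧ infDist (f t) γ ≤ D} := by
  have hclamp : Continuous fun t : ℝ => max 0 (min t L) :=
    continuous_const.max (continuous_id.min continuous_const)
  have hmem : ∀ t : ℝ, max 0 (min t L) ∈ Icc 0 L := fun t =>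
    ⟨le_max_left _ _, max_le hL (min_le_right t L)⟩
  have hG : Continuous fun t => infDist (f (max 0 (min t L))) γ :=
    (continuous_infDist_pt γ).comp ((aux_continuousOn hf).comp_continuous hclamp hmem)
  have hcl : ∀ t ∈ Icc (0:ℝ) L, max 0 (min t L) = t := fun t ht => by
    rw [min_eq_left ht.2, max_eq_right ht.1]
  have hAeq : {t | t ∈ Icc 0 L ∧ infDist (f t) γ ≤ D}
      = Icc 0 L ∩ (fun t => infDist (f (max 0 (min t L))) γ) ⁻¹' Iic D := by
    ext t
    simp only [mem_inter_iff, mem_preimage, mem_Iic, mem_setOf_eq]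
    constructor
    · rintro ⟨ht, hd⟩; exact ⟨ht, by rw [hcl t ht]; exact hd⟩
    · rintro ⟨ht, hd⟩; rw [hcl t ht] at hd; exact ⟨ht, hd⟩
  rw [hAeq]
  exact isClosed_Icc.inter (isClosed_Iic.preimage hG)

/-- Half lemma: projection of the start point is close to the first entry point into the
`D`-neighborhood of `γ`. -/
lemma aux_half (D : ℝ) {γ : Set X} [ProperSpace X] (hγc : IsCompact γ) (hγne : γ.Nonempty)
    (hcon : IsContractingSet D γ) (f : ℝ → X) (L : ℝ) (hL : 0 ≤ L)
    (hf : ∀ s ∈ Icc 0 L, ∀ t ∈ Icc 0 L, dist (f s) (f t) = |s - t|)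
    {p : X} (hp : p ∈ proj γ (f 0)) {ε : ℝ} (hε : 0 < ε)
    (hAne : {t | t ∈ Icc 0 L ∧ infDist (f t) γ ≤ D}.Nonempty) :
    ∃ p', dist p p' ≤ D ∧
      dist p' (f (sInf {t | t ∈ Icc 0 L ∧ infDist (f t) γ ≤ D})) ≤ D + 2 * ε := by
  set A := {t | t ∈ Icc 0 L ∧ infDist (f t) γ ≤ D} with hA
  have hbdd : BddBelow A := ⟨0, fun t ht => ht.1.1⟩
  have hclosed : IsClosed A := aux_closed D γ hL hf
  set a := sInf A with ha
  have haA : a ∈ A := hclosed.csInf_mem hAne hbdd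
  have hlow : ∀ t ∈ Icc 0 L, t < a → D < infDist (f t) γ := by
    intro t ht hta
    by_contra h
    exact absurd (csInf_le hbdd ⟨ht, le_of_not_gt h⟩) (not_le.mpr hta)
  rcases eq_or_lt_of_le haA.1.1 with h0 | h0
  · refine ⟨p, by rw [dist_self]; exact le_trans infDist_nonneg haA.2, ?_⟩
    have h1 : dist p (f a) = infDist (f a) γ := by
      rw [dist_comm, ← h0]; exact hp.2
    rw [h1]; linarith [haA.2]
  · set ε' := min ε a with hε'
    have hε'0 : 0 < ε' := lt_min hε h0
    have hε'a : ε' ≤ a := min_le_right _ _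
    have hε'ε : ε' ≤ ε := min_le_left _ _
    set t₁ := a - ε' with ht₁
    have ht₁0 : 0 ≤ t₁ := by simp only [ht₁]; linarith
    have ht₁a : t₁ < a := by simp only [ht₁]; linarith
    have ht₁L : t₁ ≤ L := le_trans (le_of_lt ht₁a) haA.1.2
    have hsubIcc : Icc (0:ℝ) t₁ ⊆ Icc 0 L := Icc_subset_Icc le_rfl ht₁L
    have hf1 : ∀ s ∈ Icc 0 t₁, ∀ t ∈ Icc 0 t₁, dist (f s) (f t) = |s - t| :=
      fun s hs t ht => hf s (hsubIcc hs) t (hsubIcc ht)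
    have hfar : ∀ t ∈ Icc 0 t₁, D < infDist (f t) γ :=
      fun t ht => hlow t (hsubIcc ht) (lt_of_le_of_lt ht.2 ht₁a)
    obtain ⟨p', hp'⟩ := aux_proj_nonempty hγc hγne (f t₁)
    refine ⟨p', aux_far D hγc hγne hcon f t₁ ht₁0 hf1 hfar hp hp', ?_⟩
    have hd1 : dist p' (f t₁) = infDist (f t₁) γ := by rw [dist_comm]; exact hp'.2
    have hd3 : dist (f t₁) (f a) = ε' := by
      rw [hf t₁ ⟨ht₁0, ht₁L⟩ a haA.1, ht₁,
        show a - ε' - a = -ε' by ring, abs_neg, abs_of_pos hε'0]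
    have hd2 : infDist (f t₁) γ ≤ infDist (f a) γ + ε' := by
      calc infDist (f t₁) γ ≤ infDist (f a) γ + dist (f t₁) (f a) :=
            infDist_le_infDist_add_dist
        _ = infDist (f a) γ + ε' := by rw [hd3]
    calc dist p' (f a) ≤ dist p' (f t₁) + dist (f t₁) (f a) := dist_triangle _ _ _
      _ = infDist (f t₁) γ + ε' := by rw [hd1, hd3]
      _ ≤ D + 2 * ε := by linarith [haA.2]

lemma aux_key [ProperSpace X]
    (hX : GeodesicSpace X) (D : ℝ) (hD : 0 < D) (γ : Set X)
    (hγc : IsCompact γ) (hγne : γ.Nonempty) (hcon : IsContractingSet D γ)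
    (x y : X) {p q : X} (hp : p ∈ proj γ x) (hq : q ∈ proj γ y) :
    dist p q ≤ dist x y + 4 * D := by
  obtain ⟨κ, f, L, hL, hf, hf0, hfL, hκeq⟩ := hX x y
  have hxy : dist x y = L := by
    rw [← hf0, ← hfL, hf 0 ⟨le_rfl, hL⟩ L ⟨hL, le_rfl⟩, abs_of_nonpos (by linarith)]
    ring
  subst hf0; subst hfL
  by_cases hAne : {t | t ∈ Icc 0 L ∧ infDist (f t) γ ≤ D}.Nonempty
  · set A := {t | t ∈ Icc 0 L ∧ infDist (f t) γ ≤ D} with hA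
    obtain ⟨t₀, ht₀⟩ := hAne
    refine le_of_forall_pos_le_add ?_
    intro ε hε
    have hε4 : 0 < ε / 4 := by linarith
    obtain ⟨p', hpp', hp'a⟩ := aux_half D hγc hγne hcon f L hL hf hp hε4 ⟨t₀, ht₀⟩
    set a := sInf A with hadef
    have hclosed : IsClosed A := aux_closed D γ hL hf
    have hbddB : BddBelow A := ⟨0, fun t ht => ht.1.1⟩
    have hbddA : BddAbove A := ⟨L, fun t ht => ht.1.2⟩
    have haA : a ∈ A := hclosed.csInf_mem ⟨t₀, ht₀⟩ hbddB
    set b := sSup A with hbdef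
    have hbA : b ∈ A := hclosed.csSup_mem ⟨t₀, ht₀⟩ hbddA
    have hab : a ≤ b := csInf_le_csSup ⟨t₀, ht₀⟩ hbddB hbddA
    -- reversed parametrization
    set g := fun t => f (L - t) with hg
    have hgmem : ∀ t ∈ Icc (0:ℝ) L, L - t ∈ Icc (0:ℝ) L := fun t ht =>
      ⟨by linarith [ht.2], by linarith [ht.1]⟩
    have hgf : ∀ s ∈ Icc 0 L, ∀ t ∈ Icc 0 L, dist (g s) (g t) = |s - t| := by
      intro s hs t ht
      simp only [hg]
      rw [hf (L - s) (hgmem s hs) (L - t) (hgmem t ht),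
        show L - s - (L - t) = -(s - t) by ring, abs_neg]
    have hq' : q ∈ proj γ (g 0) := by simpa [hg] using hq
    set A' := {t | t ∈ Icc 0 L ∧ infDist (g t) γ ≤ D} with hA'
    have hA'eq : ∀ t, t ∈ A' ↔ L - t ∈ A := by
      intro t
      constructor
      · rintro ⟨ht, hd⟩; exact ⟨hgmem t ht, hd⟩
      · rintro ⟨ht, hd⟩
        exact ⟨⟨by linarith [ht.2], by linarith [ht.1]⟩, hd⟩
    have hA'ne : A'.Nonempty := ⟨L - t₀, (hA'eq _).mpr (by rw [show L - (L - t₀) = t₀ by ring]; exact ht₀)⟩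
    have hbddB' : BddBelow A' := ⟨0, fun t ht => ht.1.1⟩
    have hsInfA' : sInf A' = L - b := by
      apply le_antisymm
      · exact csInf_le hbddB' ((hA'eq _).mpr (by rw [show L - (L - b) = b by ring]; exact hbA))
      · refine le_csInf hA'ne fun t ht => ?_
        have h1 : L - t ≤ b := le_csSup hbddA ((hA'eq t).mp ht)
        linarith
    obtain ⟨q', hqq', hq'b⟩ := aux_half D hγc hγne hcon g L hL hgf hq' hε4 hA'ne
    rw [hsInfA'] at hq'b
    have hq'b2 : dist q' (f b) ≤ D + 2 * (ε / 4) := by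
      simpa [hg, show L - (L - b) = b by ring] using hq'b
    have hdab : dist (f a) (f b) = b - a := by
      rw [hf a haA.1 b hbA.1, abs_of_nonpos (by linarith)]
      ring
    have h4 : dist p q ≤ dist p (f a) + dist (f a) (f b) + dist (f b) q :=
      dist_triangle4 _ _ _ _
    have h5 : dist p (f a) ≤ dist p p' + dist p' (f a) := dist_triangle _ _ _
    have h6 : dist (f b) q ≤ dist (f b) q' + dist q' q := dist_triangle _ _ _
    have h7 : dist (f b) q' = dist q' (f b) := dist_comm _ _
    have h8 : dist q' q = dist q q' := dist_comm _ _
    have hbL : b ≤ L := hbA.1.2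
    have ha0 : 0 ≤ a := haA.1.1
    rw [hxy]
    linarith
  · have hfar : ∀ t ∈ Icc 0 L, D < infDist (f t) γ := by
      intro t ht
      by_contra h
      exact hAne ⟨t, ht, le_of_not_gt h⟩
    have h1 := aux_far D hγc hγne hcon f L hL hf hfar hp hq
    have h0 : (0:ℝ) ≤ dist (f 0) (f L) := dist_nonneg
    linarith

/-- projections onto a `D`-contracting geodesic are coarsely
1-Lipschitz: `d_γ(x,y) ≤ d(x,y) + 4D`. -/
theorem stmt0 {X : Type*} [MetricSpace X] [ProperSpace X]
    (hX : GeodesicSpace X) (D : ℝ) (hD : 0 < D) (γ : Set X)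
    (hγ : IsGeodesic γ) (hcon : IsContractingSet D γ) (x y : X) :
    diam (proj γ x ∪ proj γ y) ≤ dist x y + 4 * D := by
  obtain ⟨x₀, y₀, f, L, hL, hf, hf0, hfL, hγeq⟩ := hγ
  have hγc : IsCompact γ := by
    rw [hγeq]; exact isCompact_Icc.image_of_continuousOn (aux_continuousOn hf)
  have hγne : γ.Nonempty := by
    rw [hγeq]; exact ⟨f 0, mem_image_of_mem f ⟨le_rfl, hL⟩⟩
  have hdxy : (0:ℝ) ≤ dist x y := dist_nonneg
  refine diam_le_of_forall_dist_le (by linarith) ?_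
  intro p hpu q hqu
  rcases hpu with hp | hp <;> rcases hqu with hq | hq
  · have h := aux_key hX D hD γ hγc hγne hcon x x hp hq
    rw [dist_self] at h; linarith
  · exact aux_key hX D hD γ hγc hγne hcon x y hp hq
  · have h := aux_key hX D hD γ hγc hγne hcon y x hp hq
    rw [dist_comm y x] at h; exact h
  · have h := aux_key hX D hD γ hγc hγne hcon y y hp hq
    rw [dist_self] at h; linarith
end

section
/- Let X be a proper geodesic metric space, γ a D-contracting geodesic, and [x,y] a geodesic segment with d_γ(x,y) ≥ D. Let N be the open D-neighborhood of γ and S = [x,y] ∩ closure(N). Then S is nonempty and 3D-coarsely connected, i.e., there is no subsegment of [x,y] of length greater than 3D meeting closure(N) exactly at its two endpoints. -/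
open Metric Set

variable {X : Type*} [MetricSpace X]

/-! If `[x,y]` missed the closed `D`-neighbourhood of `γ`, contraction would make the projection
of `[x,y]`, and with it `d_γ(x,y)`, smaller than `D`. Along a gap `[a,b]` the geodesic likewise
stays at distance `> D` from `γ`, so the projections of (points just inside) its endpoints are
`D`-close, while the endpoints themselves are `D`-close to `γ`: going through the projections gives
`b - a ≤ D + D + D`. In a geodesic space the closure of the open `D`-neighbourhood is the closed
one, which is what handles points at distance exactly `D`. -/

namespace IsGeodesicSeg

variable {κ : Set X} {p q : X}

lemma isCompact (h : IsGeodesicSeg κ p q) : IsCompact κ := by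
  obtain ⟨f, L, -, hf, -, -, rfl⟩ := h
  refine isCompact_Icc.image_of_continuousOn
    (LipschitzOnWith.of_dist_le_mul (K := 1) fun s hs t ht => ?_).continuousOn
  simp [hf s hs t ht, Real.dist_eq]

lemma left_mem (h : IsGeodesicSeg κ p q) : p ∈ κ := by
  obtain ⟨f, L, hL, -, rfl, -, rfl⟩ := h
  exact ⟨0, ⟨le_rfl, hL⟩, rfl⟩

lemma right_mem (h : IsGeodesicSeg κ p q) : q ∈ κ := by
  obtain ⟨f, L, hL, -, -, rfl, rfl⟩ := h
  exact ⟨L, ⟨hL, le_rfl⟩, rfl⟩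

lemma exists_mem_dist_eq (h : IsGeodesicSeg κ p q) {r : ℝ} (hr : 0 ≤ r) (hrd : r ≤ dist p q) :
    ∃ w ∈ κ, dist p w = r ∧ dist w q = dist p q - r := by
  obtain ⟨f, L, hL, hf, rfl, rfl, rfl⟩ := h
  have hpq : dist (f 0) (f L) = L := by simp [hf 0 ⟨le_rfl, hL⟩ L ⟨hL, le_rfl⟩, abs_of_nonneg hL]
  have hr' : r ∈ Icc 0 L := ⟨hr, hpq ▸ hrd⟩
  refine ⟨f r, mem_image_of_mem f hr', ?_, ?_⟩
  · simp [hf 0 ⟨le_rfl, hL⟩ r hr', abs_of_nonneg hr]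
  · rw [hf r hr' L ⟨hL, le_rfl⟩, hpq, abs_of_nonpos (by linarith [hr'.2])]
    ring

end IsGeodesicSeg

lemma isGeodesicSeg_image_Icc {f : ℝ → X} {L a b : ℝ}
    (hf : ∀ s ∈ Icc 0 L, ∀ t ∈ Icc 0 L, dist (f s) (f t) = |s - t|)
    (ha : 0 ≤ a) (hab : a ≤ b) (hb : b ≤ L) :
    IsGeodesicSeg (f '' Icc a b) (f a) (f b) := by
  have hsub : ∀ s ∈ Icc 0 (b - a), a + s ∈ Icc 0 L := fun s hs =>
    ⟨by linarith [hs.1], by linarith [hs.2]⟩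
  refine ⟨fun s => f (a + s), b - a, by linarith, fun s hs t ht => ?_, by simp, by simp, ?_⟩
  · simp [hf _ (hsub s hs) _ (hsub t ht)]
  · rw [← image_image f (a + ·), image_const_add_Icc]
    simp

lemma GeodesicSpace.mem_closure_setOf_infDist_lt_iff (hX : GeodesicSpace X) {D : ℝ}
    (hD : 0 < D) {γ : Set X} (hγ : γ.Nonempty) {z : X} :
    z ∈ closure {w | infDist w γ < D} ↔ infDist z γ ≤ D := by
  refine ⟨fun h => closure_minimal (fun w (hw : infDist w γ < D) => hw.le)
    (isClosed_le (continuous_infDist_pt γ) continuous_const) h, fun hz => ?_⟩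
  rw [Metric.mem_closure_iff]
  intro ε hε
  set r := min (ε / 2) D
  have hr : 0 < r := lt_min (half_pos hε) hD
  obtain ⟨p, hpγ, hzp⟩ := (infDist_lt_iff hγ).1 (by linarith : infDist z γ < D + r)
  obtain ⟨κ, hκ⟩ := hX z p
  -- Step from `z` towards an almost nearest point `p` by `min r (dist z p)`.
  obtain ⟨w, -, hzw, hwp⟩ := hκ.exists_mem_dist_eq (le_min hr.le dist_nonneg) (min_le_right r _)
  refine ⟨w, ?_, ?_⟩
  · show infDist w γ < D
    calc infDist w γ ≤ dist w p := infDist_le_dist_of_mem hpγ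
      _ < D := by
        rw [hwp]
        rcases min_cases r (dist z p) with ⟨hm, -⟩ | ⟨hm, -⟩ <;> rw [hm] <;> linarith
  · calc dist z w ≤ r := hzw ▸ min_le_left _ _
      _ < ε := (min_le_left _ _).trans_lt (half_lt_self hε)

lemma lt_setDist_of_forall_lt_infDist {γ κ : Set X} {D : ℝ} (hκ : IsCompact κ)
    (hκne : κ.Nonempty) (hγne : γ.Nonempty) (h : ∀ z ∈ κ, D < infDist z γ) :
    D < setDist γ κ := by
  obtain ⟨z, hz, hmin⟩ := hκ.exists_isMinOn hκne (continuous_infDist_pt γ).continuousOn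
  refine (h z hz).trans_le (le_csInf (hγne.image2 hκne) ?_)
  rintro _ ⟨a, ha, b, hb, rfl⟩
  calc infDist z γ ≤ infDist b γ := hmin hb
    _ ≤ dist b a := infDist_le_dist_of_mem ha
    _ = dist a b := dist_comm b a

lemma projSet_subset (A B : Set X) : projSet A B ⊆ A := by
  intro a ha
  simp only [projSet, mem_iUnion] at ha
  obtain ⟨_, _, haA, -⟩ := ha
  exact haA

lemma proj_subset_projSet {A B : Set X} {x : X} (hx : x ∈ B) : proj A x ⊆ projSet A B :=
  subset_biUnion_of_mem (u := fun x => proj A x) hx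

lemma proj_nonempty {A : Set X} (hA : IsCompact A) (hne : A.Nonempty) (x : X) :
    (proj A x).Nonempty := by
  obtain ⟨a, ha, hd⟩ := hA.exists_infDist_eq_dist hne x
  exact ⟨a, ha, hd.symm⟩

section Contracting

variable {D : ℝ} {γ κ : Set X} {p q : X}

lemma IsContractingSet.diam_projSet_lt (hcon : IsContractingSet D γ) (hγne : γ.Nonempty)
    (hκ : IsGeodesicSeg κ p q) (hfar : ∀ z ∈ κ, D < infDist z γ) :
    diam (projSet γ κ) < D :=
  hcon κ ⟨p, q, hκ⟩ (lt_setDist_of_forall_lt_infDist hκ.isCompact ⟨p, hκ.left_mem⟩ hγne hfar)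

lemma IsContractingSet.dist_le (hcon : IsContractingSet D γ) (hγ : IsCompact γ)
    (hγne : γ.Nonempty) (hκ : IsGeodesicSeg κ p q) (hfar : ∀ z ∈ κ, D < infDist z γ) :
    dist p q ≤ infDist p γ + D + infDist q γ := by
  obtain ⟨p', hp'γ, hpp'⟩ := proj_nonempty hγ hγne p
  obtain ⟨q', hq'γ, hqq'⟩ := proj_nonempty hγ hγne q
  have hp'q' : dist p' q' ≤ D :=
    (dist_le_diam_of_mem (hγ.isBounded.subset (projSet_subset γ κ))
      (proj_subset_projSet hκ.left_mem ⟨hp'γ, hpp'⟩)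
      (proj_subset_projSet hκ.right_mem ⟨hq'γ, hqq'⟩)).trans
      (hcon.diam_projSet_lt hγne hκ hfar).le
  calc dist p q ≤ dist p p' + dist p' q' + dist q' q := dist_triangle4 _ _ _ _
    _ ≤ infDist p γ + D + infDist q γ := by
      rw [hpp', dist_comm q' q, hqq']
      linarith

end Contracting

lemma IsContractingSet.sub_le_of_forall_mem_Ioo {D : ℝ} {γ : Set X}
    (hcon : IsContractingSet D γ) (hγ : IsCompact γ) (hγne : γ.Nonempty)
    {f : ℝ → X} {L a b : ℝ} (hf : ∀ s ∈ Icc 0 L, ∀ t ∈ Icc 0 L, dist (f s) (f t) = |s - t|)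
    (ha : a ∈ Icc 0 L) (hb : b ∈ Icc 0 L) (hfa : infDist (f a) γ ≤ D)
    (hfb : infDist (f b) γ ≤ D) (hgap : ∀ t ∈ Ioo a b, D < infDist (f t) γ) :
    b - a ≤ 3 * D := by
  have hD : 0 ≤ D := infDist_nonneg.trans hfa
  by_contra! hlong
  -- Shrinking the gap to `[a + δ, b - δ]` loses `4 * δ < b - a - 3 * D`.
  set δ := (b - a - 3 * D) / 5 with hδ_def
  have hδ : 0 < δ := by
    have : 0 < b - a - 3 * D := by linarith
    positivity
  have haδ : a + δ ∈ Icc 0 L := ⟨by linarith [ha.1], by linarith [hb.2]⟩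
  have hbδ : b - δ ∈ Icc 0 L := ⟨by linarith [ha.1], by linarith [hb.2]⟩
  have hκ := isGeodesicSeg_image_Icc hf haδ.1 (by linarith) hbδ.2
  have hfar : ∀ z ∈ f '' Icc (a + δ) (b - δ), D < infDist z γ := by
    rintro _ ⟨t, ht, rfl⟩
    exact hgap t ⟨by linarith [ht.1], by linarith [ht.2]⟩
  have hlen : dist (f (a + δ)) (f (b - δ)) = b - a - 2 * δ := by
    rw [hf _ haδ _ hbδ, abs_of_nonpos (by linarith)]
    ring
  have hnear_a : infDist (f (a + δ)) γ ≤ D + δ := by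
    have := infDist_le_infDist_add_dist (x := f (a + δ)) (y := f a) (s := γ)
    rw [hf _ haδ _ ha] at this
    simp only [add_sub_cancel_left, abs_of_pos hδ] at this
    linarith
  have hnear_b : infDist (f (b - δ)) γ ≤ D + δ := by
    have := infDist_le_infDist_add_dist (x := f (b - δ)) (y := f b) (s := γ)
    rw [hf _ hbδ _ hb] at this
    simp only [sub_sub_cancel_left, abs_neg, abs_of_pos hδ] at this
    linarith
  linarith [hcon.dist_le hγ hγne hκ hfar]

theorem stmt1_general {X : Type*} [MetricSpace X]
    (hX : GeodesicSpace X) (D : ℝ) (hD : 0 < D) (γ : Set X)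
    (hγ : IsGeodesic γ) (hcon : IsContractingSet D γ)
    (x y : X) (f : ℝ → X) (L : ℝ) (hL : 0 ≤ L)
    (hf : ∀ s ∈ Icc 0 L, ∀ t ∈ Icc 0 L, dist (f s) (f t) = |s - t|)
    (hx : f 0 = x) (hy : f L = y)
    (hfar : D ≤ diam (proj γ x ∪ proj γ y)) :
    (f '' Icc 0 L ∩ closure {z | infDist z γ < D}).Nonempty ∧
    ∀ a b : ℝ, a ∈ Icc 0 L → b ∈ Icc 0 L → a ≤ b →
      f a ∈ closure {z | infDist z γ < D} → f b ∈ closure {z | infDist z γ < D} →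
      (∀ t ∈ Ioo a b, f t ∉ closure {z | infDist z γ < D}) →
      b - a ≤ 3 * D := by
  obtain ⟨_, _, hγseg⟩ := hγ
  have hγc := hγseg.isCompact
  have hγne : γ.Nonempty := ⟨_, hγseg.left_mem⟩
  have hcl : ∀ z, z ∈ closure {w | infDist w γ < D} ↔ infDist z γ ≤ D := fun _ =>
    hX.mem_closure_setOf_infDist_lt_iff hD hγne
  refine ⟨?_, fun a b ha hb _ hfa hfb hgap => ?_⟩
  · by_contra hempty
    have hxy : IsGeodesicSeg (f '' Icc 0 L) x y := ⟨f, L, hL, hf, hx, hy, rfl⟩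
    have hsmall := hcon.diam_projSet_lt hγne hxy fun z hz =>
      not_le.1 fun h => hempty ⟨z, hz, (hcl z).2 h⟩
    have hsub : proj γ x ∪ proj γ y ⊆ projSet γ (f '' Icc 0 L) :=
      union_subset (proj_subset_projSet hxy.left_mem) (proj_subset_projSet hxy.right_mem)
    linarith [diam_mono hsub (hγc.isBounded.subset (projSet_subset γ _))]
  · exact hcon.sub_le_of_forall_mem_Ioo hγc hγne hf ha hb ((hcl _).1 hfa) ((hcl _).1 hfb)
      fun t ht => not_le.1 fun h => hgap t ht ((hcl _).2 h)

/-- for a geodesic `[x,y]` with `d_γ(x,y) ≥ D`, the intersection of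
`[x,y]` with the closure of the open `D`-neighborhood of `γ` is nonempty and
`3D`-coarsely connected. -/
theorem stmt1 {X : Type*} [MetricSpace X] [ProperSpace X]
    (hX : GeodesicSpace X) (D : ℝ) (hD : 0 < D) (γ : Set X)
    (hγ : IsGeodesic γ) (hcon : IsContractingSet D γ)
    (x y : X) (f : ℝ → X) (L : ℝ) (hL : 0 ≤ L)
    (hf : ∀ s ∈ Icc 0 L, ∀ t ∈ Icc 0 L, dist (f s) (f t) = |s - t|)
    (hx : f 0 = x) (hy : f L = y)
    (hfar : D ≤ diam (proj γ x ∪ proj γ y)) :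
    (f '' Icc 0 L ∩ closure {z | infDist z γ < D}).Nonempty ∧
    ∀ a b : ℝ, a ∈ Icc 0 L → b ∈ Icc 0 L → a ≤ b →
      f a ∈ closure {z | infDist z γ < D} → f b ∈ closure {z | infDist z γ < D} →
      (∀ t ∈ Ioo a b, f t ∉ closure {z | infDist z γ < D}) →
      b - a ≤ 3 * D :=
  stmt1_general hX D hD γ hγ hcon x y f L hL hf hx hy hfar
end

section
/- Let X be a geodesic metric space and D > 0. There exists E = E(D) > D such that: if x, y ∈ X and κ₁, ..., κ_N are geodesics, and the geodesic [x,y] contains subsegments [x₁,y₁], ..., [x_N,y_N] in order from left to right such that each [xᵢ,yᵢ] D-fellow travels with κᵢ (endpoints within D and Hausdorff distance < D), then the sequence (x, κ₁, ..., κ_N, y) is E-aligned, i.e., d_{κᵢ}(terminal point of κᵢ, κ_{i+1}) < E and d_{κ_{i+1}}(initial point of κ_{i+1}, κᵢ) < E for all consecutive pairs, with the endpoint conditions for x and y as degenerate segments. -/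
/-!
Let `f` on `[s, t]` fellow-travel `κ` within `D`, and let `q` be `D`-close to `f w` with `w ≥ t`.
A nearest point `p ∈ κ` to `q` is at distance at most `d(q, f t) + D` from `q`, and `p` is
`D`-close to some `f u` with `u ∈ [s, t]`. Since `f t` lies between `f w` and `f u` on the
geodesic, `d(f w, f u) = d(f w, f t) + d(f t, f u)`, which forces `d(f t, f u) ≤ 4D`, so `p`
lies in the `5D`-ball around `f t`. The symmetric statement holds for `w ≤ s` and `f s`.
Every projection that alignment asks about is of one of these two kinds (for a neighbouring
`κ`, each of its points is `D`-close to the part of the geodesic beyond the current segment),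
so all the relevant diameters are at most `10D`, and `E = 11D` works.
-/
open Metric Set

variable {X : Type*} [MetricSpace X]

lemma mem_projSet_iff {A B : Set X} {p : X} :
    p ∈ projSet A B ↔ ∃ q ∈ B, p ∈ proj A q := by
  simp only [projSet, mem_iUnion, exists_prop]

theorem dist_le_of_mem_proj {S κ : Set X} {D r : ℝ} {z w q p : X}
    (hfin : hausdorffEDist S κ ≠ ⊤) (hH : hausdorffDist S κ < D) (hz : z ∈ S)
    (hsplit : ∀ u ∈ S, dist w u = dist w z + dist z u) (hq : dist q w ≤ r)
    (hp : p ∈ proj κ q) : dist p z ≤ 3 * D + 2 * r := by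
  obtain ⟨c, hc, hzc⟩ := exists_dist_lt_of_hausdorffDist_lt hz hH hfin
  obtain ⟨u, hu, hpu⟩ := exists_dist_lt_of_hausdorffDist_lt' hp.1 hH hfin
  have hqp : dist q p ≤ r + dist w z + D := calc
    dist q p ≤ dist q c := hp.2 ▸ infDist_le_dist_of_mem hc
    _ ≤ dist q w + dist w z + dist z c := dist_triangle4 q w z c
    _ ≤ r + dist w z + D := by linarith
  have hzu : dist z u ≤ 2 * D + 2 * r := by
    have := dist_triangle4 w q p u
    rw [hsplit u hu, dist_comm w q, dist_comm p u] at this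
    linarith
  calc dist p z ≤ dist u p + dist u z := dist_triangle_left p z u
    _ ≤ 3 * D + 2 * r := by rw [dist_comm u z]; linarith

theorem projSet_subset_closedBall {S κ W B : Set X} {D r : ℝ} {z : X}
    (hfin : hausdorffEDist S κ ≠ ⊤) (hH : hausdorffDist S κ < D) (hz : z ∈ S)
    (hsplit : ∀ w ∈ W, ∀ u ∈ S, dist w u = dist w z + dist z u)
    (hB : ∀ q ∈ B, ∃ w ∈ W, dist q w ≤ r) :
    projSet κ B ⊆ closedBall z (3 * D + 2 * r) := by
  intro p hp
  obtain ⟨q, hq, hpq⟩ := mem_projSet_iff.1 hp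
  obtain ⟨w, hw, hqw⟩ := hB q hq
  exact dist_le_of_mem_proj hfin hH hz (hsplit w hw) hqw hpq

theorem exists_dist_le_of_hausdorffDist_lt {S κ W : Set X} {D : ℝ}
    (hfin : hausdorffEDist S κ ≠ ⊤) (hH : hausdorffDist S κ < D) (hSW : S ⊆ W) :
    ∀ q ∈ κ, ∃ w ∈ W, dist q w ≤ D := by
  intro q hq
  obtain ⟨w, hw, hwq⟩ := exists_dist_lt_of_hausdorffDist_lt' hq hH hfin
  exact ⟨w, hSW hw, (dist_comm q w).trans_le hwq.le⟩

section UnitSpeed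

variable {f : ℝ → X} {L : ℝ}

theorem isCompact_image_Icc_of_dist_eq
    (hf : ∀ u ∈ Icc 0 L, ∀ v ∈ Icc 0 L, dist (f u) (f v) = |u - v|) :
    IsCompact (f '' Icc 0 L) := by
  have hiso : Isometry ((Icc 0 L).domRestrict f) :=
    Isometry.of_dist_eq fun u v => (hf u u.2 v v.2).trans (Real.dist_eq u v).symm
  exact isCompact_Icc.image_of_continuousOn (continuousOn_iff_continuous_domRestrict.2 hiso.continuous)

theorem IsGeodesicSeg.isBounded {γ : Set X} {a b : X} (h : IsGeodesicSeg γ a b) :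
    Bornology.IsBounded γ := by
  obtain ⟨g, M, -, hg, -, -, rfl⟩ := h
  exact (isCompact_image_Icc_of_dist_eq hg).isBounded

theorem IsGeodesicSeg.nonempty {γ : Set X} {a b : X} (h : IsGeodesicSeg γ a b) : γ.Nonempty := by
  obtain ⟨g, M, hM, -, -, -, rfl⟩ := h
  exact (nonempty_Icc.2 hM).image g

theorem dist_eq_add_dist_of_le
    (hf : ∀ u ∈ Icc 0 L, ∀ v ∈ Icc 0 L, dist (f u) (f v) = |u - v|) {u v w : ℝ}
    (hu : 0 ≤ u) (huv : u ≤ v) (hvw : v ≤ w) (hw : w ≤ L) :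
    dist (f u) (f w) = dist (f u) (f v) + dist (f v) (f w) := by
  have hv : 0 ≤ v := hu.trans huv
  have hv' : v ≤ L := hvw.trans hw
  rw [hf u ⟨hu, huv.trans hv'⟩ w ⟨hv.trans hvw, hw⟩, hf u ⟨hu, huv.trans hv'⟩ v ⟨hv, hv'⟩,
    hf v ⟨hv, hv'⟩ w ⟨hv.trans hvw, hw⟩, abs_sub_comm u w, abs_sub_comm u v, abs_sub_comm v w,
    abs_of_nonneg (by linarith), abs_of_nonneg (by linarith), abs_of_nonneg (by linarith)]
  ring

variable {s t D r : ℝ} {κ B : Set X}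

theorem projSet_subset_closedBall_right
    (hf : ∀ u ∈ Icc 0 L, ∀ v ∈ Icc 0 L, dist (f u) (f v) = |u - v|)
    (hs : 0 ≤ s) (hst : s ≤ t)
    (hfin : hausdorffEDist (f '' Icc s t) κ ≠ ⊤)
    (hH : hausdorffDist (f '' Icc s t) κ < D)
    (hB : ∀ q ∈ B, ∃ w ∈ f '' Icc t L, dist q w ≤ r) :
    projSet κ B ⊆ closedBall (f t) (3 * D + 2 * r) := by
  refine projSet_subset_closedBall hfin hH (mem_image_of_mem f ⟨hst, le_rfl⟩) ?_ hB
  rintro _ ⟨w, hw, rfl⟩ _ ⟨u, hu, rfl⟩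
  rw [dist_comm, dist_eq_add_dist_of_le hf (hs.trans hu.1) hu.2 hw.1 hw.2, dist_comm (f u),
    dist_comm (f t) (f w), add_comm]

theorem projSet_subset_closedBall_left
    (hf : ∀ u ∈ Icc 0 L, ∀ v ∈ Icc 0 L, dist (f u) (f v) = |u - v|)
    (hst : s ≤ t) (ht : t ≤ L)
    (hfin : hausdorffEDist (f '' Icc s t) κ ≠ ⊤)
    (hH : hausdorffDist (f '' Icc s t) κ < D)
    (hB : ∀ q ∈ B, ∃ w ∈ f '' Icc 0 s, dist q w ≤ r) :
    projSet κ B ⊆ closedBall (f s) (3 * D + 2 * r) := by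
  refine projSet_subset_closedBall hfin hH (mem_image_of_mem f ⟨le_rfl, hst⟩) ?_ hB
  rintro _ ⟨w, hw, rfl⟩ _ ⟨u, hu, rfl⟩
  exact dist_eq_add_dist_of_le hf hw.1 hw.2 hu.1 (hu.2.trans ht)

theorem IsGeodesicSeg.hausdorffEDist_image_Icc_ne_top {γ : Set X} {a b : X}
    (h : IsGeodesicSeg γ a b) (hf : ∀ u ∈ Icc 0 L, ∀ v ∈ Icc 0 L, dist (f u) (f v) = |u - v|)
    (hs : 0 ≤ s) (hst : s ≤ t) (ht : t ≤ L) :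
    hausdorffEDist (f '' Icc s t) γ ≠ ⊤ :=
  hausdorffEDist_ne_top_of_nonempty_of_bounded ((nonempty_Icc.2 hst).image f) h.nonempty
    ((isCompact_image_Icc_of_dist_eq hf).isBounded.subset (image_mono (Icc_subset_Icc hs ht)))
    h.isBounded

end UnitSpeed

/-- if a geodesic `[x,y]` contains subsegments, in order, that
`D`-fellow travel geodesics `κ₁, …, κ_N`, then `(x, κ₁, …, κ_N, y)` is
`E`-aligned, for some `E = E(D) > D`. -/
theorem stmt13 {X : Type*} [MetricSpace X] (D : ℝ) (hD : 0 < D) :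
    ∃ E : ℝ, D < E ∧
      ∀ (x y : X) (f : ℝ → X) (L : ℝ) (N : ℕ)
        (κ : Fin N → Set X) (a b : Fin N → X) (s t : Fin N → ℝ),
        0 ≤ L →
        (∀ u ∈ Icc 0 L, ∀ v ∈ Icc 0 L, dist (f u) (f v) = |u - v|) →
        f 0 = x → f L = y →
        (∀ i, IsGeodesicSeg (κ i) (a i) (b i)) →
        (∀ i, 0 ≤ s i ∧ s i ≤ t i ∧ t i ≤ L) →
        (∀ i : Fin N, ∀ hi : (i : ℕ) + 1 < N, t i ≤ s ⟨(i : ℕ) + 1, hi⟩) →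
        (∀ i, dist (f (s i)) (a i) < D ∧ dist (f (t i)) (b i) < D ∧
          hausdorffDist (f '' Icc (s i) (t i)) (κ i) < D) →
        (∀ i : Fin N, ∀ hi : (i : ℕ) + 1 < N,
          diam (projSet (κ i) {b i} ∪ projSet (κ i) (κ ⟨(i : ℕ) + 1, hi⟩)) < E ∧
          diam (projSet (κ ⟨(i : ℕ) + 1, hi⟩) {a ⟨(i : ℕ) + 1, hi⟩}
            ∪ projSet (κ ⟨(i : ℕ) + 1, hi⟩) (κ i)) < E) ∧
        (∀ hN : 0 < N,
          diam (projSet (κ ⟨0, hN⟩) {a ⟨0, hN⟩} ∪ projSet (κ ⟨0, hN⟩) {x}) < E ∧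
          diam (projSet (κ ⟨N - 1, Nat.sub_lt hN one_pos⟩)
              {b ⟨N - 1, Nat.sub_lt hN one_pos⟩}
            ∪ projSet (κ ⟨N - 1, Nat.sub_lt hN one_pos⟩) {y}) < E) := by
  refine ⟨11 * D, by linarith, ?_⟩
  intro x y f L N κ a b s t hL hf rfl rfl hκ hst hord hfell
  have hfin (i : Fin N) : hausdorffEDist (f '' Icc (s i) (t i)) (κ i) ≠ ⊤ :=
    (hκ i).hausdorffEDist_image_Icc_ne_top hf (hst i).1 (hst i).2.1 (hst i).2.2
  have near (i : Fin N) {I : Set ℝ} (hI : Icc (s i) (t i) ⊆ I) :=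
    exists_dist_le_of_hausdorffDist_lt (hfin i) (hfell i).2.2 (image_mono (f := f) hI)
  have point {I : Set ℝ} {u : ℝ} {q : X} (hu : u ∈ I) (hq : dist (f u) q ≤ D) :
      ∀ q' ∈ ({q} : Set X), ∃ w ∈ f '' I, dist q' w ≤ D := by
    rintro _ rfl
    exact ⟨f u, mem_image_of_mem f hu, (dist_comm _ _).trans_le hq⟩
  have right (i : Fin N) {B : Set X} (hB : ∀ q ∈ B, ∃ w ∈ f '' Icc (t i) L, dist q w ≤ D) :=
    projSet_subset_closedBall_right hf (hst i).1 (hst i).2.1 (hfin i) (hfell i).2.2 hB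
  have left (i : Fin N) {B : Set X} (hB : ∀ q ∈ B, ∃ w ∈ f '' Icc 0 (s i), dist q w ≤ D) :=
    projSet_subset_closedBall_left hf (hst i).2.1 (hst i).2.2 (hfin i) (hfell i).2.2 hB
  have diam_lt {κ B₁ B₂ : Set X} {z : X} (h₁ : projSet κ B₁ ⊆ closedBall z (3 * D + 2 * D))
      (h₂ : projSet κ B₂ ⊆ closedBall z (3 * D + 2 * D)) :
      diam (projSet κ B₁ ∪ projSet κ B₂) < 11 * D :=
    (diam_le_of_subset_closedBall (by linarith) (union_subset h₁ h₂)).trans_lt (by linarith)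
  refine ⟨fun i hi => ⟨diam_lt (right i ?_) (right i ?_), diam_lt (left _ ?_) (left _ ?_)⟩,
    fun hN => ⟨diam_lt (left _ ?_) (left _ ?_), diam_lt (right _ ?_) (right _ ?_)⟩⟩
  · exact point ⟨le_rfl, (hst i).2.2⟩ (hfell i).2.1.le
  · exact near _ (Icc_subset_Icc (hord i hi) (hst _).2.2)
  · exact point ⟨(hst _).1, le_rfl⟩ (hfell _).1.le
  · exact near i (Icc_subset_Icc (hst i).1 (hord i hi))
  · exact point ⟨(hst _).1, le_rfl⟩ (hfell _).1.le
  · exact point ⟨le_rfl, (hst _).1⟩ ((dist_self _).trans_le hD.le)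
  · exact point ⟨le_rfl, (hst _).2.2⟩ (hfell _).2.1.le
  · exact point ⟨(hst _).2.2, le_rfl⟩ ((dist_self _).trans_le hD.le)
end

section
/- Let X be a geodesic metric space, let f : [0,M] → X and g : J → X be length (unit-speed) parameterizations of geodesics [x',y'] and γ respectively. Suppose for each t ∈ [0,M] there exists s_t ∈ J with d(f(t), g(s_t)) < 2.5D. Then for all t, t' ∈ [0,M], | |s_t − s_{t'}| − |t − t'| | ≤ 5D; consequently the map t ↦ s_t coincides, up to additive error at most 10D, with a map of the form t ↦ ±t + C, and the geodesics [x',y'] and g([s_0, s_M]) are within Hausdorff distance 10D. -/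
/-! Comparing distances through the two `5D/2`-close pairs `f t ≈ g (s t)` shows that `s` is a
rough isometry of `[0, M]` into `ℝ` with constant `K = 5D`. Such a map is pinned down by its
endpoints: `|s t - s 0|` and `|s M - s t|` are `t` and `M - t` up to `K`, while `|s M - s 0|` is
at least `M - K`, so `s` stays within `2K` of `t ↦ ±t + s 0` and within `3K/2` of `[s 0, s M]`.
Conversely `s` jumps by at most `K` over short intervals, so (taking the supremum of the times at
which `s` is still below a given level) every point of `[s 0, s M]` is within `3K/2` of a value of
`s`. Pushing both facts through `g` gives the Hausdorff bound `5D/2 + 15D/2 = 10D`. -/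

open Metric Set

variable {X : Type*} [MetricSpace X]

def IsRoughIsometryOn (K : ℝ) (s : ℝ → ℝ) (I : Set ℝ) : Prop :=
  ∀ t ∈ I, ∀ t' ∈ I, |(|s t - s t'| - |t - t'|)| ≤ K

theorem isRoughIsometryOn_of_dist_le {f g : ℝ → X} {I J : Set ℝ} {s : ℝ → ℝ} {ε : ℝ}
    (hf : ∀ u ∈ I, ∀ v ∈ I, dist (f u) (f v) = |u - v|)
    (hg : ∀ u ∈ J, ∀ v ∈ J, dist (g u) (g v) = |u - v|)
    (hsJ : MapsTo s I J) (hclose : ∀ t ∈ I, dist (f t) (g (s t)) ≤ ε) :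
    IsRoughIsometryOn (2 * ε) s I := by
  intro t ht t' ht'
  rw [← hf t ht t' ht', ← hg _ (hsJ ht) _ (hsJ ht'), ← Real.dist_eq]
  calc dist (dist (g (s t)) (g (s t'))) (dist (f t) (f t'))
      ≤ dist (g (s t)) (f t) + dist (g (s t')) (f t') := dist_dist_dist_le _ _ _ _
    _ ≤ 2 * ε := by rw [dist_comm, dist_comm (g _)]; linarith [hclose t ht, hclose t' ht']

namespace IsRoughIsometryOn

variable {K M t t' : ℝ} {s : ℝ → ℝ} {I : Set ℝ}

theorem neg (hs : IsRoughIsometryOn K s I) : IsRoughIsometryOn K (fun t => -s t) I := by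
  intro t ht t' ht'
  simpa only [neg_sub_neg, abs_sub_comm (s t')] using hs t ht t' ht'

theorem abs_sub_le (hs : IsRoughIsometryOn K s I) (ht : t ∈ I) (ht' : t' ∈ I) :
    |s t - s t'| ≤ |t - t'| + K := by
  linarith [(abs_le.1 (hs t ht t' ht')).2]

theorem sub_le_abs_sub (hs : IsRoughIsometryOn K s I) (ht : t ∈ I) (ht' : t' ∈ I) :
    |t - t'| - K ≤ |s t - s t'| := by
  linarith [(abs_le.1 (hs t ht t' ht')).1]

theorem abs_sub_left_le (hs : IsRoughIsometryOn K s (Icc 0 M)) (ht : t ∈ Icc 0 M) :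
    |s t - s 0| ≤ t + K := by
  simpa only [sub_zero, abs_of_nonneg ht.1] using
    hs.abs_sub_le ht (left_mem_Icc.2 (ht.1.trans ht.2))

theorem abs_right_sub_le (hs : IsRoughIsometryOn K s (Icc 0 M)) (ht : t ∈ Icc 0 M) :
    |s M - s t| ≤ M - t + K := by
  simpa only [abs_of_nonneg (sub_nonneg.2 ht.2)] using
    hs.abs_sub_le (right_mem_Icc.2 (ht.1.trans ht.2)) ht

theorem sub_le_right_sub_left (hs : IsRoughIsometryOn K s (Icc 0 M)) (hM : 0 ≤ M)
    (hord : s 0 ≤ s M) : M - K ≤ s M - s 0 := by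
  simpa only [sub_zero, abs_of_nonneg hM, abs_of_nonneg (sub_nonneg.2 hord)] using
    hs.sub_le_abs_sub (right_mem_Icc.2 hM) (left_mem_Icc.2 hM)

theorem abs_sub_add_le_of_le (hs : IsRoughIsometryOn K s (Icc 0 M)) (hord : s 0 ≤ s M)
    (ht : t ∈ Icc 0 M) : |s t - (t + s 0)| ≤ 2 * K := by
  have := hs.sub_le_right_sub_left (ht.1.trans ht.2) hord
  rw [abs_le]
  constructor <;>
    linarith [le_abs_self (s t - s 0), le_abs_self (s M - s t), hs.abs_sub_left_le ht,
      hs.abs_right_sub_le ht]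

theorem exists_abs_sub_add_le (hs : IsRoughIsometryOn K s (Icc 0 M)) :
    ∃ C : ℝ, (∀ t ∈ Icc 0 M, |s t - (t + C)| ≤ 2 * K) ∨
      (∀ t ∈ Icc 0 M, |s t - (-t + C)| ≤ 2 * K) := by
  rcases le_total (s 0) (s M) with hord | hord
  · exact ⟨s 0, .inl fun t ht => hs.abs_sub_add_le_of_le hord ht⟩
  · refine ⟨s 0, .inr fun t ht => ?_⟩
    rw [← abs_neg]
    convert hs.neg.abs_sub_add_le_of_le (neg_le_neg hord) ht using 2
    ring

theorem exists_mem_uIcc_abs_sub_le (hs : IsRoughIsometryOn K s (Icc 0 M)) (ht : t ∈ Icc 0 M) :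
    ∃ u ∈ uIcc (s 0) (s M), |s t - u| ≤ 3 * K / 2 := by
  wlog hord : s 0 ≤ s M generalizing s
  · obtain ⟨u, hu, h⟩ := this hs.neg (neg_le_neg (le_of_not_ge hord))
    refine ⟨-u, ?_, ?_⟩
    · rw [← image_neg_uIcc] at hu
      obtain ⟨v, hv, rfl⟩ := hu
      rwa [neg_neg]
    · rw [← abs_neg]
      convert h using 2
      ring
  have h₀ := hs.abs_sub_left_le ht
  have h₁ := hs.abs_right_sub_le ht
  have h₂ := hs.sub_le_right_sub_left (ht.1.trans ht.2) hord
  rcases lt_or_ge (s t) (s 0) with hlt | hge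
  · refine ⟨s 0, left_mem_uIcc, ?_⟩
    rw [abs_of_neg (sub_neg.2 hlt)]
    linarith [neg_abs_le (s t - s 0), le_abs_self (s M - s t)]
  rcases le_or_gt (s t) (s M) with hle | hgt
  · refine ⟨s t, mem_uIcc_of_le hge hle, ?_⟩
    rw [sub_self, abs_zero]
    linarith [(abs_nonneg _).trans (hs t ht t ht)]
  · refine ⟨s M, right_mem_uIcc, ?_⟩
    rw [abs_of_pos (sub_pos.2 hgt)]
    linarith [le_abs_self (s t - s 0), neg_abs_le (s M - s t)]

end IsRoughIsometryOn

theorem exists_close_pair_apply_le_le (s : ℝ → ℝ) {a b u δ : ℝ} (hab : a ≤ b) (hδ : 0 < δ)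
    (hu : u ∈ Icc (s a) (s b)) :
    ∃ t₁ ∈ Icc a b, ∃ t₂ ∈ Icc a b, |t₁ - t₂| ≤ δ ∧ s t₁ ≤ u ∧ u ≤ s t₂ := by
  set T := {t ∈ Icc a b | s t ≤ u}
  have haT : a ∈ T := ⟨left_mem_Icc.2 hab, hu.1⟩
  have hbdd : BddAbove T := ⟨b, fun t ht => ht.1.2⟩
  set c := sSup T
  obtain ⟨t₁, ht₁T, ht₁⟩ := exists_lt_of_lt_csSup ⟨a, haT⟩ (sub_lt_self c (half_pos hδ))
  have ht₁c : t₁ ≤ c := le_csSup hbdd ht₁T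
  set t₂ := min (c + δ / 2) b
  have ht₂ : t₂ ∈ Icc a b := ⟨le_min (by linarith [ht₁T.1.1]) hab, min_le_right _ _⟩
  have ht₁₂ : t₁ ≤ t₂ := le_min (by linarith) ht₁T.1.2
  refine ⟨t₁, ht₁T.1, t₂, ht₂, ?_, ht₁T.2, ?_⟩
  · rw [abs_of_nonpos (sub_nonpos.2 ht₁₂)]
    linarith [min_le_left (c + δ / 2) b]
  · obtain h | h : t₂ = c + δ / 2 ∨ t₂ = b := min_choice _ _
    · by_contra! hlt
      linarith [le_csSup hbdd ⟨ht₂, hlt.le⟩]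
    · exact h ▸ hu.2

theorem exists_abs_sub_le_of_mem_uIcc {s : ℝ → ℝ} {a b K u : ℝ}
    (hs : ∀ t ∈ Icc a b, ∀ t' ∈ Icc a b, |s t - s t'| ≤ |t - t'| + K) (hK : 0 < K) (hab : a ≤ b)
    (hu : u ∈ uIcc (s a) (s b)) : ∃ t ∈ Icc a b, |s t - u| ≤ 3 * K / 2 := by
  wlog hord : s a ≤ s b generalizing s u
  · have hs' : ∀ t ∈ Icc a b, ∀ t' ∈ Icc a b, |-s t - -s t'| ≤ |t - t'| + K := by
      intro t ht t' ht'
      rw [neg_sub_neg, abs_sub_comm]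
      exact hs t ht t' ht'
    have hu' : -u ∈ uIcc (-s a) (-s b) := by
      rw [← image_neg_uIcc]
      exact mem_image_of_mem _ hu
    obtain ⟨t, ht, h⟩ := this hs' hu' (neg_le_neg (le_of_not_ge hord))
    exact ⟨t, ht, by rwa [neg_sub_neg, abs_sub_comm] at h⟩
  obtain ⟨t₁, ht₁, t₂, ht₂, hδ, h₁, h₂⟩ :=
    exists_close_pair_apply_le_le s hab (half_pos hK) (uIcc_of_le hord ▸ hu)
  refine ⟨t₁, ht₁, ?_⟩
  calc |s t₁ - u| = |u - s t₁| := abs_sub_comm _ _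
    _ ≤ |s t₂ - s t₁| := abs_sub_left_of_mem_uIcc (mem_uIcc_of_le h₁ h₂)
    _ ≤ |t₂ - t₁| + K := hs t₂ ht₂ t₁ ht₁
    _ ≤ 3 * K / 2 := by rw [abs_sub_comm]; linarith

/-- coarse rigidity of coarsely distance-preserving maps between
the parameter intervals of two geodesics. -/
theorem stmt17 {X : Type*} [MetricSpace X] (D M : ℝ) (hD : 0 < D) (hM : 0 ≤ M)
    (f g : ℝ → X) (J : Set ℝ) (hJ : J.OrdConnected)
    (hf : ∀ u ∈ Icc 0 M, ∀ v ∈ Icc 0 M, dist (f u) (f v) = |u - v|)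
    (hg : ∀ u ∈ J, ∀ v ∈ J, dist (g u) (g v) = |u - v|)
    (s : ℝ → ℝ) (hsJ : ∀ t ∈ Icc 0 M, s t ∈ J)
    (hclose : ∀ t ∈ Icc 0 M, dist (f t) (g (s t)) < 5 * D / 2) :
    (∀ t ∈ Icc (0:ℝ) M, ∀ t' ∈ Icc (0:ℝ) M,
      |(|s t - s t'| - |t - t'|)| ≤ 5 * D) ∧
    (∃ C : ℝ, (∀ t ∈ Icc (0:ℝ) M, |s t - (t + C)| ≤ 10 * D) ∨
              (∀ t ∈ Icc (0:ℝ) M, |s t - (-t + C)| ≤ 10 * D)) ∧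
    hausdorffDist (f '' Icc 0 M) (g '' uIcc (s 0) (s M)) ≤ 10 * D := by
  have hs : IsRoughIsometryOn (5 * D) s (Icc 0 M) := by
    convert isRoughIsometryOn_of_dist_le hf hg hsJ fun t ht => (hclose t ht).le using 1
    ring
  have hJ₀ : uIcc (s 0) (s M) ⊆ J :=
    hJ.uIcc_subset (hsJ 0 (left_mem_Icc.2 hM)) (hsJ M (right_mem_Icc.2 hM))
  have hnear : ∀ t ∈ Icc 0 M, ∀ u ∈ uIcc (s 0) (s M), |s t - u| ≤ 3 * (5 * D) / 2 →
      dist (f t) (g u) ≤ 10 * D := by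
    intro t ht u hu htu
    calc dist (f t) (g u) ≤ dist (f t) (g (s t)) + dist (g (s t)) (g u) := dist_triangle _ _ _
      _ ≤ 10 * D := by rw [hg _ (hsJ t ht) _ (hJ₀ hu)]; linarith [hclose t ht]
  refine ⟨hs, ?_, hausdorffDist_le_of_mem_dist (by positivity) ?_ ?_⟩
  · obtain ⟨C, hC⟩ := hs.exists_abs_sub_add_le
    exact ⟨C, by simpa only [← mul_assoc, show (2 : ℝ) * 5 = 10 by norm_num] using hC⟩
  · rintro _ ⟨t, ht, rfl⟩
    obtain ⟨u, hu, htu⟩ := hs.exists_mem_uIcc_abs_sub_le ht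
    exact ⟨g u, mem_image_of_mem g hu, hnear t ht u hu htu⟩
  · rintro _ ⟨u, hu, rfl⟩
    obtain ⟨t, ht, htu⟩ := exists_abs_sub_le_of_mem_uIcc (fun t ht t' ht' => hs.abs_sub_le ht ht')
      (by positivity) hM hu
    exact ⟨f t, mem_image_of_mem f ht, dist_comm (g u) (f t) ▸ hnear t ht u hu htu⟩
end
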